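/- If n is an odd positive integer, then the fixed subspace {f : ZMod n → ℂ | λ_t f = f for all t ∈ ZMod n} of the regular representation of the dihedral quandle R_n equals the one-dimensional ℂ-span of the constant function f_0. -/
import Mathlib


/-- The regular representation of the dihedral quandle `R_n = Quandle.dihedral n`
(`ZMod n` with `x ◃ y = 2y - x`) on functions `ZMod n → ℂ`:
`(λ_t f)(x) = f (2t - x)`. -/
def lam (n : ℕ) (t : ZMod n) (f : ZMod n → ℂ) : ZMod n → ℂ :=
  fun x => f (2 * t - x)

/-- `ω = exp(2πi/n)`. -/
noncomputable def dihedralOmega (n : ℕ) : ℂ :=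
  Complex.exp (2 * Real.pi * Complex.I / n)

/-- The character `f_s : ZMod n → ℂ`, `f_s(x) = ω^{s·x.val}`. -/
noncomputable def chi (n : ℕ) (s : ℤ) : ZMod n → ℂ :=
  fun x => dihedralOmega n ^ (s * (x.val : ℤ))

/-- `V_s`: the `ℂ`-linear span of `{f_s, f_{-s}}` in `ZMod n → ℂ`. -/
noncomputable def Vsub (n : ℕ) (s : ℤ) : Submodule ℂ (ZMod n → ℂ) :=
  Submodule.span ℂ {chi n s, chi n (-s)}

/-- For `n` odd, the fixed subspace of the regular representation of the
dihedral quandle `R_n` is the one-dimensional span of the constant function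
`f_0 = 1`. -/
theorem fixed_subspace_odd (n : ℕ) (hpos : 0 < n) (hodd : Odd n) :
    {f : ZMod n → ℂ | ∀ t : ZMod n, lam n t f = f}
        = ↑(ℂ ∙ ((fun _ => 1) : ZMod n → ℂ)) ∧
    Module.finrank ℂ (ℂ ∙ ((fun _ => 1) : ZMod n → ℂ)) = 1 := by
  haveI : NeZero n := ⟨hpos.ne'⟩
  have h2 : IsUnit (2 : ZMod n) := by
    have hc : Nat.Coprime 2 n := Nat.coprime_two_left.mpr hodd
    simpa using (ZMod.isUnit_iff_coprime 2 n).mpr hc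
  obtain ⟨u, hu⟩ := h2
  have hone : ((fun _ => 1) : ZMod n → ℂ) ≠ 0 := by
    intro h
    have := congrFun h 0
    simp at this
  constructor
  · ext f
    simp only [Set.mem_setOf_eq, SetLike.mem_coe, Submodule.mem_span_singleton]
    constructor
    · intro hf
      refine ⟨f 0, funext fun y => ?_⟩
      have key := congrFun (hf ((u⁻¹ : (ZMod n)ˣ) * y)) 0
      have h2y : (2 : ZMod n) * ((u⁻¹ : (ZMod n)ˣ) * y) - 0 = y := by
        rw [← hu]
        rw [sub_zero, ← mul_assoc]
        simp
      simp only [lam, h2y] at key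
      simpa using key.symm
    · rintro ⟨a, rfl⟩ t
      funext x
      simp [lam]
  · exact finrank_span_singleton hone
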